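/- arXiv:1604.00362 — 2 statements merged into one kernel-verified Lean document; each statement's English description precedes it below -/
import Mathlib

section
/- For every natural number p, the conjugate Féjer kernel K̃_p(ω) = ∑_{j=0}^p 2∑_{k=0}^j sin(2πkω) is non-negative whenever ω ∈ [m, m + 1/2] for some integer m. -/
/-!
With `t = 2πω`, the identity `4 sin²(t/2) sin(kt) = 2 sin(kt) - sin((k+1)t) - sin((k-1)t)` makes
`2 sin²(t/2) K̃_p` telescope twice, to `(p+1) sin t - sin((p+1)t)`. This is nonnegative for
`t ∈ [0, π]` because `|sin(nt)| ≤ n |sin t|`, and `K̃_p` has period `1`.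
-/

open Real Finset

noncomputable def conjDirichlet (j : ℕ) (ω : ℝ) : ℝ :=
  2 * ∑ k ∈ range (j + 1), sin (2 * π * k * ω)

noncomputable def conjFejer (p : ℕ) (ω : ℝ) : ℝ :=
  ∑ j ∈ range (p + 1), conjDirichlet j ω

theorem abs_sin_nat_mul_le (n : ℕ) (x : ℝ) : |sin (n * x)| ≤ n * |sin x| := by
  induction n with
  | zero => simp
  | succ n ih =>
    calc |sin ((n + 1 : ℕ) * x)| = |sin (n * x) * cos x + cos (n * x) * sin x| := by
          rw [Nat.cast_succ, add_one_mul, sin_add]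
      _ ≤ |sin (n * x)| * |cos x| + |cos (n * x)| * |sin x| := by
          rw [← abs_mul, ← abs_mul]; exact abs_add_le _ _
      _ ≤ |sin (n * x)| * 1 + 1 * |sin x| := by
          gcongr
          exacts [abs_cos_le_one x, abs_cos_le_one _]
      _ ≤ (n + 1 : ℕ) * |sin x| := by push_cast; linarith

theorem four_mul_sin_sq_mul_sin (x ω : ℝ) :
    4 * sin (π * ω) ^ 2 * sin (2 * π * x * ω) =
      2 * sin (2 * π * x * ω) - sin (2 * π * (x + 1) * ω) - sin (2 * π * (x - 1) * ω) := by
  have h_sum : sin (2 * π * (x + 1) * ω) + sin (2 * π * (x - 1) * ω)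
      = 2 * sin (2 * π * x * ω) * cos (2 * (π * ω)) := by
    rw [sin_add_sin]; ring_nf
  rw [cos_two_mul_eq_one_sub] at h_sum
  linear_combination h_sum

theorem two_mul_sin_sq_mul_conjDirichlet (j : ℕ) (ω : ℝ) :
    2 * sin (π * ω) ^ 2 * conjDirichlet j ω =
      sin (2 * π * ω) + sin (2 * π * j * ω) - sin (2 * π * (j + 1) * ω) := by
  set f : ℕ → ℝ := fun k => sin (2 * π * k * ω) - sin (2 * π * (k - 1) * ω) with hf
  have h_term (k : ℕ) : 4 * sin (π * ω) ^ 2 * sin (2 * π * k * ω) = f k - f (k + 1) := by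
    simp only [hf, Nat.cast_succ, add_sub_cancel_right]
    linear_combination four_mul_sin_sq_mul_sin k ω
  calc 2 * sin (π * ω) ^ 2 * conjDirichlet j ω
      = ∑ k ∈ range (j + 1), 4 * sin (π * ω) ^ 2 * sin (2 * π * k * ω) := by
        rw [conjDirichlet, mul_sum, mul_sum]
        exact sum_congr rfl fun k _ => by ring
    _ = f 0 - f (j + 1) := by simp only [h_term, sum_range_sub']
    _ = _ := by simp [hf]; ring

theorem two_mul_sin_sq_mul_conjFejer (p : ℕ) (ω : ℝ) :
    2 * sin (π * ω) ^ 2 * conjFejer p ω =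
      ((p + 1 : ℕ) : ℝ) * sin (2 * π * ω) - sin ((p + 1 : ℕ) * (2 * π * ω)) := by
  set g : ℕ → ℝ := fun j => sin (j * (2 * π * ω)) with hg
  calc 2 * sin (π * ω) ^ 2 * conjFejer p ω
      = ∑ j ∈ range (p + 1), (sin (2 * π * ω) + (g j - g (j + 1))) := by
        rw [conjFejer, mul_sum]
        refine sum_congr rfl fun j _ => ?_
        rw [two_mul_sin_sq_mul_conjDirichlet, hg]
        push_cast
        ring_nf
    _ = ((p + 1 : ℕ) : ℝ) * sin (2 * π * ω) + (g 0 - g (p + 1)) := by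
      rw [sum_add_distrib, sum_const, card_range, nsmul_eq_mul, sum_range_sub']
    _ = _ := by simp [hg]; ring

theorem conjFejer_nonneg_of_mem_Icc (p : ℕ) {ω : ℝ} (hω : ω ∈ Set.Icc 0 (1 / 2)) :
    0 ≤ conjFejer p ω := by
  obtain ⟨hω₀, hω₁⟩ := hω
  rcases hω₀.eq_or_lt with rfl | hω_pos
  · simp [conjFejer, conjDirichlet]
  have h_half_pos : 0 < sin (π * ω) :=
    sin_pos_of_pos_of_lt_pi (by positivity) (by nlinarith [pi_pos])
  have h_sin_nonneg : 0 ≤ sin (2 * π * ω) :=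
    sin_nonneg_of_nonneg_of_le_pi (by positivity) (by nlinarith [pi_pos])
  have h_bound := (le_abs_self _).trans (abs_sin_nat_mul_le (p + 1) (2 * π * ω))
  rw [abs_of_nonneg h_sin_nonneg] at h_bound
  have h_prod : 0 ≤ 2 * sin (π * ω) ^ 2 * conjFejer p ω := by
    rw [two_mul_sin_sq_mul_conjFejer]; linarith
  exact (mul_nonneg_iff_of_pos_left (by positivity)).mp h_prod

theorem conjFejer_add_int (p : ℕ) (ω : ℝ) (m : ℤ) : conjFejer p (ω + m) = conjFejer p ω := by
  have h_sin (k : ℕ) : sin (2 * π * k * (ω + m)) = sin (2 * π * k * ω) := by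
    rw [← sin_add_int_mul_two_pi (2 * π * k * ω) (k * m)]
    push_cast
    ring_nf
  simp only [conjFejer, conjDirichlet, h_sin]

theorem conj_fejer_kernel_nonneg (p : ℕ) (ω : ℝ) (m : ℤ)
    (hω : ω ∈ Set.Icc (m : ℝ) (m + 1 / 2)) :
    0 ≤ ∑ j ∈ Finset.range (p + 1),
        (2 * ∑ k ∈ Finset.range (j + 1), Real.sin (2 * π * k * ω)) := by
  have h := conjFejer_nonneg_of_mem_Icc p (ω := ω - m)
    ⟨sub_nonneg.mpr hω.1, by linarith [hω.2]⟩
  rwa [← conjFejer_add_int p _ m, sub_add_cancel] at h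
end

section
/- Let a: ℤ → ℝ and b: ℤ → ℝ with a(j) ≤ 0 for all j ≠ 0, a(−j) = a(j), b(−j) = −b(j), sign(j·b(j)) constant equal to s ∈ {−1,1} for j ≠ 0, and suppose A := ∑_{j∈ℤ} (a(j) − s·sign(j)·b(j)) converges and A ≥ 0. Then for m̃ = 2m+1 and every k ∈ {0,…,m̃−1}, a(0) + 2∑_{j=1}^{m} [a(j)cos(2πjk/m̃) − b(j)sin(2πjk/m̃)] ≥ A ≥ 0. -/
/-!
The constant-sign hypothesis makes the summand of `A` equal to `a j - |b j|`, an even sequence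
that is nonpositive off `0`; hence `A` is at most each symmetric partial sum
`a 0 + 2 ∑_{j=1}^m (a j - |b j|)`. Termwise, `a j ≤ a j cos θ` because `a j ≤ 0`, and
`b j sin θ ≤ |b j|`.
-/

open Real Finset

theorem hasSum_le_sum_of_nonpos {ι α : Type*} [AddCommMonoid α] [PartialOrder α]
    [IsOrderedAddMonoid α] [TopologicalSpace α] [OrderClosedTopology α] {f : ι → α} {a : α}
    (s : Finset ι) (hs : ∀ i ∉ s, f i ≤ 0) (hf : HasSum f a) : a ≤ ∑ i ∈ s, f i :=
  sum_le_hasSum (α := αᵒᵈ) s hs hf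

theorem Function.Even.sum_Icc_neg_eq {M : Type*} [AddCommGroup M] {f : ℤ → M} (hf : f.Even)
    (N : ℕ) : ∑ j ∈ Icc (-N : ℤ) N, f j = f 0 + 2 • ∑ j ∈ Icc 1 N, f j := by
  rw [sum_Icc_of_even_eq_range hf, range_eq_Ico, sum_eq_sum_Ico_succ_bot N.succ_pos,
    Nat.succ_eq_add_one, Ico_add_one_right_eq_Icc]
  simp only [Nat.cast_zero, smul_add]
  abel

theorem sign_mul_sign_mul_eq_abs {x y s : ℝ} (hx : x ≠ 0) (h : sign (x * y) = s) :
    s * sign x * y = |y| := by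
  subst h
  rcases hx.lt_or_gt with hx | hx <;> rcases lt_trichotomy y 0 with hy | hy | hy <;>
    simp [sign_of_neg, sign_of_pos, hx, hy, mul_pos_of_neg_of_neg, mul_neg_of_neg_of_pos,
      mul_neg_of_pos_of_neg, abs_of_neg, abs_of_pos]

theorem sub_abs_le_mul_cos_sub_mul_sin {x y : ℝ} (hx : x ≤ 0) (θ : ℝ) :
    x - |y| ≤ x * cos θ - y * sin θ := by
  have hcos : x ≤ x * cos θ := by simpa using mul_le_mul_of_nonpos_left (cos_le_one θ) hx
  have hsin : y * sin θ ≤ |y| := by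
    calc y * sin θ ≤ |y| * |sin θ| := abs_mul y (sin θ) ▸ le_abs_self _
      _ ≤ |y| := mul_le_of_le_one_right (abs_nonneg y) (abs_sin_le_one θ)
  linarith

theorem craigmile_complex_bound_general (a b : ℤ → ℝ)
    (ha_neg : ∀ j : ℤ, j ≠ 0 → a j ≤ 0)
    (ha_even : ∀ j : ℤ, a (-j) = a j)
    (hb_odd : ∀ j : ℤ, b (-j) = -b j)
    (s : ℝ)
    (hsign : ∀ j : ℤ, j ≠ 0 → Real.sign ((j : ℝ) * b j) = s)
    (A : ℝ)
    (hA : HasSum (fun j : ℤ => a j - s * Real.sign (j : ℝ) * b j) A)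
    (m : ℕ) (k : ℕ) :
    A ≤ a 0 + 2 * ∑ j ∈ Finset.Icc 1 m,
        (a j * Real.cos (2 * π * j * k / (2 * m + 1)) -
          b j * Real.sin (2 * π * j * k / (2 * m + 1))) := by
  have hb0 : b 0 = 0 := by linarith [neg_zero (G := ℤ) ▸ hb_odd 0]
  set g : ℤ → ℝ := fun j => a j - |b j|
  have hA' : HasSum g A := by
    convert hA using 2 with j
    rcases eq_or_ne j 0 with rfl | hj
    · simp [g, hb0]
    · rw [sign_mul_sign_mul_eq_abs (Int.cast_ne_zero.2 hj) (hsign j hj)]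
  have hg_even : g.Even := fun j => by simp only [g, ha_even, hb_odd, abs_neg]
  have hg_nonpos : ∀ j ∉ Icc (-m : ℤ) m, g j ≤ 0 := fun j hj =>
    sub_nonpos_of_le <| (ha_neg j (by rintro rfl; simp at hj)).trans (abs_nonneg _)
  calc A ≤ ∑ j ∈ Icc (-m : ℤ) m, g j := hasSum_le_sum_of_nonpos _ hg_nonpos hA'
    _ = a 0 + 2 * ∑ j ∈ Icc 1 m, (a j - |b j|) := by
      rw [hg_even.sum_Icc_neg_eq, nsmul_eq_mul]; simp [g, hb0]
    _ ≤ _ := by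
      gcongr a 0 + 2 * ?_
      exact sum_le_sum fun j hj =>
        sub_abs_le_mul_cos_sub_mul_sin (ha_neg j (by simp at hj; omega)) _

theorem craigmile_complex_bound (a b : ℤ → ℝ)
    (ha_neg : ∀ j : ℤ, j ≠ 0 → a j ≤ 0)
    (ha_even : ∀ j : ℤ, a (-j) = a j)
    (hb_odd : ∀ j : ℤ, b (-j) = -b j)
    (s : ℝ) (hs : s = 1 ∨ s = -1)
    (hsign : ∀ j : ℤ, j ≠ 0 → Real.sign ((j : ℝ) * b j) = s)
    (A : ℝ)
    (hA : HasSum (fun j : ℤ => a j - s * Real.sign (j : ℝ) * b j) A)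
    (hA0 : 0 ≤ A)
    (m : ℕ) (hm : 0 < m) (k : ℕ) (hk : k < 2 * m + 1) :
    A ≤ a 0 + 2 * ∑ j ∈ Finset.Icc 1 m,
        (a j * Real.cos (2 * π * j * k / (2 * m + 1)) -
          b j * Real.sin (2 * π * j * k / (2 * m + 1))) :=
  craigmile_complex_bound_general a b ha_neg ha_even hb_odd s hsign A hA m k
end
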